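/- Let (A, μ, α) be a multiplicative Hom-algebra over a field k of characteristic 0. Then the following are equivalent: (1) x²α(x) = α(x)x² and x⁴ = α(x²)α(x²) for all x ∈ A; (2) as(x,x,x) = 0 and as(x², α(x), α(x)) = 0 for all x ∈ A; (3) A is up to fourth Hom-power associative; (4) A is Hom-power associative. -/
import Mathlib


variable {k A : Type*} [Field k] [CharZero k] [AddCommGroup A] [Module k A]

/-- The `n`-th Hom-power: `x^1 = x`, `x^n = x^{n-1} · α^{n-2}(x)`. -/
def homPow (μ : A →ₗ[k] A →ₗ[k] A) (α : A →ₗ[k] A) (x : A) : ℕ → A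
  | 0 => x
  | 1 => x
  | n + 2 => μ (homPow μ α x (n + 1)) ((α ^ n) x)

/-- `A` is `n`-th Hom-power associative. -/
def IsNthHomPowerAssoc (μ : A →ₗ[k] A →ₗ[k] A) (α : A →ₗ[k] A) (n : ℕ) : Prop :=
  ∀ (x : A) (i : ℕ), 1 ≤ i → i ≤ n - 1 →
    homPow μ α x n =
      μ ((α ^ (n - i - 1)) (homPow μ α x i)) ((α ^ (i - 1)) (homPow μ α x (n - i)))

/-- `A` is Hom-power associative. -/
def IsHomPowerAssoc (μ : A →ₗ[k] A →ₗ[k] A) (α : A →ₗ[k] A) : Prop :=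
  ∀ n : ℕ, 2 ≤ n → IsNthHomPowerAssoc μ α n

/-- `A` is up to `n`-th Hom-power associative. -/
def IsUpToNthHomPowerAssoc (μ : A →ₗ[k] A →ₗ[k] A) (α : A →ₗ[k] A) (n : ℕ) : Prop :=
  ∀ m : ℕ, 2 ≤ m → m ≤ n → IsNthHomPowerAssoc μ α m

/-- The Hom-algebra `(A, μ, α)` is multiplicative. -/
def IsMultiplicative (μ : A →ₗ[k] A →ₗ[k] A) (α : A →ₗ[k] A) : Prop :=
  ∀ x y : A, α (μ x y) = μ (α x) (α y)


/-- The Hom-associator `as(x,y,z) = (xy)α(z) − α(x)(yz)`. -/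
def homAssoc (μ : A →ₗ[k] A →ₗ[k] A) (α : A →ₗ[k] A) (x y z : A) : A :=
  μ (μ x y) (α z) - μ (α x) (μ y z)

set_option linter.unusedSectionVars false

namespace Stmt16Aux

/-- `RR a b c d = ((ab)α(c))α²(d) − α(ab)(α(c)α(d))`. -/
def RR (μ : A →ₗ[k] A →ₗ[k] A) (α : A →ₗ[k] A) (a b c d : A) : A :=
  μ (μ (μ a b) (α c)) (α (α d)) - μ (α (μ a b)) (μ (α c) (α d))

/-- `bb s t = α^t(x^{s+1}) · α^s(x^{t+1})`, i.e. the candidate factorization of `x^{s+t+2}`. -/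
def bb (μ : A →ₗ[k] A →ₗ[k] A) (α : A →ₗ[k] A) (x : A) (s t : ℕ) : A :=
  μ ((α ^ t) (homPow μ α x (s + 1))) ((α ^ s) (homPow μ α x (t + 1)))

variable (μ : A →ₗ[k] A →ₗ[k] A) (α : A →ₗ[k] A)

lemma smul_cancel {c : k} (hc : c ≠ 0) {v : A} (h : c • v = 0) : v = 0 := by
  have := congrArg (fun w => c⁻¹ • w) h
  simpa [smul_smul, inv_mul_cancel₀ hc] using this

lemma addSelf (μ : A →ₗ[k] A →ₗ[k] A) {v : A} (h : v + v = 0) : v = 0 := by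
  refine smul_cancel (c := (2:k)) (by norm_num) ?_
  rw [two_smul]; exact h

lemma pow_app (m : ℕ) (v : A) : α ((α ^ m) v) = (α ^ (m + 1)) v := by
  rw [pow_succ']; rfl

lemma homPow_one (x : A) : homPow μ α x 1 = x := rfl

lemma homPow_two (x : A) : homPow μ α x 2 = μ x x := by
  show μ (homPow μ α x 1) ((α ^ 0) x) = μ x x
  rw [pow_zero]; rfl

lemma homPow_three (x : A) : homPow μ α x 3 = μ (μ x x) (α x) := by
  show μ (homPow μ α x 2) ((α ^ 1) x) = _
  rw [pow_one, homPow_two]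

lemma homPow_four (x : A) : homPow μ α x 4 = μ (μ (μ x x) (α x)) (α (α x)) := by
  show μ (homPow μ α x 3) ((α ^ 2) x) = _
  rw [homPow_three]
  rfl

lemma bb_eq (x : A) (s t ms mt es et : ℕ)
    (hms : ms = s + 1) (hmt : mt = t + 1) (hes : es = t) (het : et = s) :
    μ ((α ^ es) (homPow μ α x ms)) ((α ^ et) (homPow μ α x mt)) = bb μ α x s t := by
  subst hms hmt hes het; rfl

/-- Key product lemma: products of lower Hom-powers with matching twists collapse. -/
lemma prod_pow {n : ℕ} (hmul : IsMultiplicative μ α)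
    (IH : ∀ m, 2 ≤ m → m < n → IsNthHomPowerAssoc μ α m)
    (x : A) (i j r r1 r2 m mi mj : ℕ)
    (h1 : r1 = j + r) (h2 : r2 = i + r) (hm : m = i + j + 2)
    (hmi : mi = i + 1) (hmj : mj = j + 1) (hlt : i + j + 2 < n) :
    μ ((α ^ r1) (homPow μ α x mi)) ((α ^ r2) (homPow μ α x mj))
      = (α ^ r) (homPow μ α x m) := by
  subst h1 h2 hm hmi hmj
  induction r with
  | zero =>
      have H := IH (i + j + 2) (by omega) hlt x (i + 1) (by omega) (by omega)
      have e1 : i + j + 2 - (i + 1) - 1 = j := by omega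
      have e2 : i + 1 - 1 = i := by omega
      have e3 : i + j + 2 - (i + 1) = j + 1 := by omega
      rw [e1, e2, e3] at H
      simpa using H.symm
  | succ r ih =>
      have g1 : j + (r + 1) = (j + r) + 1 := by omega
      have g2 : i + (r + 1) = (i + r) + 1 := by omega
      rw [g1, g2, ← pow_app, ← pow_app, ← hmul, ih, pow_app]


/-- Full trilinear symmetrization of `as(x,x,x) = 0`. -/
lemma sym3 (h3 : ∀ y : A, homAssoc μ α y y y = 0) (u v w : A) :
    homAssoc μ α u v w + homAssoc μ α u w v + homAssoc μ α v u w +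
      homAssoc μ α v w u + homAssoc μ α w u v + homAssoc μ α w v u = 0 := by
  have hL : ∀ a b : A,
      homAssoc μ α a a b + homAssoc μ α a b a + homAssoc μ α b a a = 0 := by
    intro a b
    have e1 := h3 (a + b)
    have e2 := h3 (a - b)
    have eb := h3 b
    have key : (homAssoc μ α a a b + homAssoc μ α a b a + homAssoc μ α b a a)
        + (homAssoc μ α a a b + homAssoc μ α a b a + homAssoc μ α b a a)
        = homAssoc μ α (a+b) (a+b) (a+b) - homAssoc μ α (a-b) (a-b) (a-b)
          - (homAssoc μ α b b b + homAssoc μ α b b b) := by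
      simp only [homAssoc, map_add, map_sub, LinearMap.add_apply, LinearMap.sub_apply]
      abel
    rw [e1, e2, eb] at key
    simp only [sub_zero, zero_sub, add_zero, zero_add, neg_zero] at key
    exact addSelf μ key
  have k1 := hL (u + v) w
  have k2 := hL u w
  have k3 := hL v w
  have key2 : homAssoc μ α u v w + homAssoc μ α u w v + homAssoc μ α v u w +
      homAssoc μ α v w u + homAssoc μ α w u v + homAssoc μ α w v u
      = (homAssoc μ α (u+v) (u+v) w + homAssoc μ α (u+v) w (u+v) + homAssoc μ α w (u+v) (u+v))
        - (homAssoc μ α u u w + homAssoc μ α u w u + homAssoc μ α w u u)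
        - (homAssoc μ α v v w + homAssoc μ α v w v + homAssoc μ α w v v) := by
    simp only [homAssoc, map_add, LinearMap.add_apply]
    abel
  rw [k1, k2, k3] at key2
  simpa using key2

/-- The (1,1,2)-symmetrization of the degree-4 identity `as(x²,α(x),α(x)) = 0`. -/
lemma sym22 (h4 : ∀ y : A, homAssoc μ α (μ y y) (α y) (α y) = 0) (p q r : A) :
    RR μ α q r p p + RR μ α r q p p + RR μ α q p r p + RR μ α r p q p +
      RR μ α q p p r + RR μ α r p p q + RR μ α p q r p + RR μ α p r q p +
      RR μ α p q p r + RR μ α p r p q + RR μ α p p q r + RR μ α p p r q = 0 := by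
  have h4' : ∀ y : A, RR μ α y y y y = 0 := fun y => h4 y
  have hc2 : ∀ a b : A, RR μ α a a b b + RR μ α a b a b + RR μ α a b b a +
      RR μ α b a a b + RR μ α b a b a + RR μ α b b a a = 0 := by
    intro a b
    have e1 := h4' (a + b)
    have e2 := h4' (a - b)
    have ea := h4' a
    have eb := h4' b
    have key : (RR μ α a a b b + RR μ α a b a b + RR μ α a b b a +
        RR μ α b a a b + RR μ α b a b a + RR μ α b b a a)
        + (RR μ α a a b b + RR μ α a b a b + RR μ α a b b a +
        RR μ α b a a b + RR μ α b a b a + RR μ α b b a a)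
        = RR μ α (a+b) (a+b) (a+b) (a+b) + RR μ α (a-b) (a-b) (a-b) (a-b)
          - (RR μ α a a a a + RR μ α a a a a) - (RR μ α b b b b + RR μ α b b b b) := by
      simp only [RR, map_add, map_sub, LinearMap.add_apply, LinearMap.sub_apply]
      abel
    rw [e1, e2, ea, eb] at key
    simp only [sub_zero, zero_sub, add_zero, zero_add, neg_zero] at key
    exact addSelf μ key
  have k1 := hc2 p (q + r)
  have k2 := hc2 p q
  have k3 := hc2 p r
  have key2 : RR μ α q r p p + RR μ α r q p p + RR μ α q p r p + RR μ α r p q p +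
      RR μ α q p p r + RR μ α r p p q + RR μ α p q r p + RR μ α p r q p +
      RR μ α p q p r + RR μ α p r p q + RR μ α p p q r + RR μ α p p r q
      = (RR μ α p p (q+r) (q+r) + RR μ α p (q+r) p (q+r) + RR μ α p (q+r) (q+r) p +
          RR μ α (q+r) p p (q+r) + RR μ α (q+r) p (q+r) p + RR μ α (q+r) (q+r) p p)
        - (RR μ α p p q q + RR μ α p q p q + RR μ α p q q p +
          RR μ α q p p q + RR μ α q p q p + RR μ α q q p p)
        - (RR μ α p p r r + RR μ α p r p r + RR μ α p r r p +
          RR μ α r p p r + RR μ α r p r p + RR μ α r r p p) := by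
    simp only [RR, map_add, LinearMap.add_apply]
    abel
  rw [k1, k2, k3] at key2
  simpa using key2


/-- Normal form of a Hom-associator of twisted powers: with degrees `d+1` and twists
`α^{sum of other degrees}`, `as = bb (d1+d2+1) d3 - bb d1 (d2+d3+1)`. -/
lemma asterm {n : ℕ} (hmul : IsMultiplicative μ α)
    (IH : ∀ m, 2 ≤ m → m < n → IsNthHomPowerAssoc μ α m) (x : A)
    (d1 d2 d3 t1 t2 t3 s1 s2 s3 s4 : ℕ)
    (ht1 : t1 = d2 + d3) (ht2 : t2 = d1 + d3) (ht3 : t3 = d1 + d2)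
    (hs1 : s1 = d1 + d2 + 1) (hs2 : s2 = d3) (hs3 : s3 = d1) (hs4 : s4 = d2 + d3 + 1)
    (hn : d1 + d2 + d3 + 3 = n) :
    homAssoc μ α ((α ^ t1) (homPow μ α x (d1+1))) ((α ^ t2) (homPow μ α x (d2+1)))
        ((α ^ t3) (homPow μ α x (d3+1)))
      = bb μ α x s1 s2 - bb μ α x s3 s4 := by
  unfold homAssoc
  rw [prod_pow μ α hmul IH x d1 d2 d3 t1 t2 (d1+d2+2) (d1+1) (d2+1)
        (by omega) (by omega) rfl rfl rfl (by omega)]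
  rw [prod_pow μ α hmul IH x d2 d3 d1 t2 t3 (d2+d3+2) (d2+1) (d3+1)
        (by omega) (by omega) rfl rfl rfl (by omega)]
  simp only [pow_app]
  rw [bb_eq μ α x s1 s2 (d1+d2+2) (d3+1) d3 (t3+1) (by omega) (by omega) (by omega) (by omega),
      bb_eq μ α x s3 s4 (d1+1) (d2+d3+2) (t1+1) d1 (by omega) (by omega) (by omega) (by omega)]

/-- Normal form of `RR` applied to twisted powers. -/
lemma Rterm {n : ℕ} (hmul : IsMultiplicative μ α)
    (IH : ∀ m, 2 ≤ m → m < n → IsNthHomPowerAssoc μ α m) (x : A)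
    (e1 e2 e3 e4 t1 t2 t3 t4 s1 s2 s3 s4 : ℕ)
    (ht1 : t1 = e2 + e3 + e4) (ht2 : t2 = e1 + e3 + e4)
    (ht3 : t3 = e1 + e2 + e4) (ht4 : t4 = e1 + e2 + e3)
    (hs1 : s1 = e1 + e2 + e3 + 2) (hs2 : s2 = e4)
    (hs3 : s3 = e1 + e2 + 1) (hs4 : s4 = e3 + e4 + 1)
    (hn : e1 + e2 + e3 + e4 + 4 = n) :
    RR μ α ((α ^ t1) (homPow μ α x (e1+1))) ((α ^ t2) (homPow μ α x (e2+1)))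
        ((α ^ t3) (homPow μ α x (e3+1))) ((α ^ t4) (homPow μ α x (e4+1)))
      = bb μ α x s1 s2 - bb μ α x s3 s4 := by
  unfold RR
  rw [prod_pow μ α hmul IH x e1 e2 (e3+e4) t1 t2 (e1+e2+2) (e1+1) (e2+1)
        (by omega) (by omega) rfl rfl rfl (by omega)]
  simp only [pow_app]
  rw [prod_pow μ α hmul IH x (e1+e2+1) e3 e4 (e3+e4) (t3+1) (e1+e2+e3+3) (e1+e2+2) (e3+1)
        (by omega) (by omega) (by omega) (by omega) (by omega) (by omega)]
  rw [prod_pow μ α hmul IH x e3 e4 (e1+e2+1) (t3+1) (t4+1) (e3+e4+2) (e3+1) (e4+1)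
        (by omega) (by omega) rfl rfl rfl (by omega)]
  rw [bb_eq μ α x s1 s2 (e1+e2+e3+3) (e4+1) e4 (t4+1+1) (by omega) (by omega) (by omega) (by omega),
      bb_eq μ α x s3 s4 (e1+e2+2) (e3+e4+2) (e3+e4+1) (e1+e2+1) (by omega) (by omega) (by omega) (by omega)]


/-- The rational coefficient sequence in the final recursion. -/
def ff : ℕ → ℚ
  | 0 => 0
  | 1 => 1
  | n + 2 => (4 + 8 * ff (n + 1) - 3 * ff n) / 3

lemma ff_prop : ∀ s : ℕ, 0 ≤ ff s ∧ ff s + 1 ≤ ff (s + 1)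
  | 0 => by simp [ff]
  | s + 1 => by
    obtain ⟨h0, h1⟩ := ff_prop s
    constructor
    · linarith
    · have he : ff (s + 2) = (4 + 8 * ff (s + 1) - 3 * ff s) / 3 := by
        simp only [ff]
      rw [he]
      linarith

lemma ff_ge_one : ∀ s : ℕ, 1 ≤ ff (s + 1)
  | 0 => by simp [ff]
  | s + 1 => by
    have h := (ff_prop (s + 1)).2
    have h2 := ff_ge_one s
    linarith

lemma ff_rec (s : ℕ) : (3:ℚ) * ff (s + 2) = 4 * ff 1 + 8 * ff (s + 1) - 3 * ff s := by
  simp only [ff]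
  ring

lemma ff_rec_k (s : ℕ) :
    (3:k) * (ff (s + 2) : k) = 4 * (ff 1 : k) + 8 * (ff (s + 1) : k) - 3 * (ff s : k) := by
  exact_mod_cast congrArg (fun q : ℚ => (q : k)) (ff_rec s)


/-- The Albert–Yau induction step: `n`-th Hom-power associativity from all lower ones. -/
lemma step (hmul : IsMultiplicative μ α)
    (h3 : ∀ y : A, homAssoc μ α y y y = 0)
    (h4 : ∀ y : A, homAssoc μ α (μ y y) (α y) (α y) = 0)
    {n : ℕ} (hn : 4 ≤ n)
    (IH : ∀ m, 2 ≤ m → m < n → IsNthHomPowerAssoc μ α m) :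
    IsNthHomPowerAssoc μ α n := by
  intro x i hi1 hi2
  -- `bb s 0 = x^n` when `s + 2 = n`
  have hbase : ∀ s, s + 2 = n → bb μ α x s 0 = homPow μ α x n := by
    intro s hs
    have hb : bb μ α x s 0 = homPow μ α x (s + 2) := by
      show μ ((α ^ (0:ℕ)) (homPow μ α x (s+1))) ((α ^ s) (homPow μ α x (0+1))) = _
      rw [pow_zero]
      rfl
    rw [hb, hs]
  -- the six-term (trilinear) relation
  have hD : ∀ i j l : ℕ, i + j + l + 3 = n →
      bb μ α x (i+j+1) l + bb μ α x (i+l+1) j + bb μ α x (j+l+1) i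
        = bb μ α x i (j+l+1) + bb μ α x j (i+l+1) + bb μ α x l (i+j+1) := by
    intro i j l hijl
    have S := sym3 μ α h3 ((α^(j+l)) (homPow μ α x (i+1))) ((α^(i+l)) (homPow μ α x (j+1)))
      ((α^(i+j)) (homPow μ α x (l+1)))
    rw [asterm μ α hmul IH x i j l (j+l) (i+l) (i+j) (i+j+1) l i (j+l+1)
          (by omega) (by omega) (by omega) (by omega) (by omega) (by omega) (by omega) (by omega),
        asterm μ α hmul IH x i l j (j+l) (i+j) (i+l) (i+l+1) j i (j+l+1)
          (by omega) (by omega) (by omega) (by omega) (by omega) (by omega) (by omega) (by omega),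
        asterm μ α hmul IH x j i l (i+l) (j+l) (i+j) (i+j+1) l j (i+l+1)
          (by omega) (by omega) (by omega) (by omega) (by omega) (by omega) (by omega) (by omega),
        asterm μ α hmul IH x j l i (i+l) (i+j) (j+l) (j+l+1) i j (i+l+1)
          (by omega) (by omega) (by omega) (by omega) (by omega) (by omega) (by omega) (by omega),
        asterm μ α hmul IH x l i j (i+j) (j+l) (i+l) (i+l+1) j l (i+j+1)
          (by omega) (by omega) (by omega) (by omega) (by omega) (by omega) (by omega) (by omega),
        asterm μ α hmul IH x l j i (i+j) (i+l) (j+l) (j+l+1) i l (i+j+1)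
          (by omega) (by omega) (by omega) (by omega) (by omega) (by omega) (by omega) (by omega)] at S
    refine sub_eq_zero.mp (addSelf μ ?_)
    rw [← S]
    abel
  -- antisymmetric part is linear: bb s t - bb t s = (s+1) • E0
  have claimd : ∀ s t, s + t + 2 = n → bb μ α x s t - bb μ α x t s
      = ((s:k) + 1) • (bb μ α x 0 (n-2) - bb μ α x (n-2) 0) := by
    intro s
    induction s using Nat.strong_induction_on with
    | _ s IHs =>
      intro t ht
      rcases eq_or_ne s 0 with rfl | hs0
      · have htt : t = n - 2 := by omega
        subst htt
        simp
      obtain ⟨s', rfl⟩ : ∃ s', s = s' + 1 := ⟨s - 1, by omega⟩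
      have d0 := hD s' 0 t (by omega)
      simp only [Nat.add_zero, Nat.zero_add] at d0
      have ih := IHs s' (by omega) (t+1) (by omega)
      have harg : s' + t + 1 = n - 2 := by omega
      rw [harg] at d0
      have key : bb μ α x (s'+1) t - bb μ α x t (s'+1)
          - (((s'+1:ℕ):k) + 1) • (bb μ α x 0 (n-2) - bb μ α x (n-2) 0)
          = (bb μ α x (s'+1) t + bb μ α x (n-2) 0 + bb μ α x (t+1) s'
              - (bb μ α x s' (t+1) + bb μ α x 0 (n-2) + bb μ α x t (s'+1)))
            + (bb μ α x s' (t+1) - bb μ α x (t+1) s'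
              - (((s':ℕ):k) + 1) • (bb μ α x 0 (n-2) - bb μ α x (n-2) 0)) := by
        push_cast
        module
      rw [sub_eq_zero_of_eq d0, sub_eq_zero_of_eq ih, add_zero] at key
      exact sub_eq_zero.mp key
  have hE0 : bb μ α x 0 (n-2) - bb μ α x (n-2) 0 = 0 := by
    have h1 := claimd (n-2) 0 (by omega)
    have key : ((((n-2:ℕ):k) + 1) + 1) • (bb μ α x 0 (n-2) - bb μ α x (n-2) 0)
        = -(bb μ α x (n-2) 0 - bb μ α x 0 (n-2)
            - (((n-2:ℕ):k) + 1) • (bb μ α x 0 (n-2) - bb μ α x (n-2) 0)) := by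
      module
    rw [sub_eq_zero_of_eq h1, neg_zero] at key
    refine smul_cancel (c := (((n-2:ℕ):k) + 1) + 1) ?_ key
    have : ((((n-2)+1+1 : ℕ)):k) = (((n-2:ℕ):k) + 1) + 1 := by push_cast; ring
    rw [← this]
    exact Nat.cast_ne_zero.mpr (by omega)
  have hsym : ∀ s t, s + t + 2 = n → bb μ α x s t = bb μ α x t s := by
    intro s t h
    have := claimd s t h
    rw [hE0, smul_zero] at this
    exact sub_eq_zero.mp this
  -- the twelve-term (quartic) relation
  have hMraw : ∀ J K : ℕ, J + K + 4 = n →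
      6 • bb μ α x (J+K+2) 0 + 3 • bb μ α x (J+2) K + 3 • bb μ α x (K+2) J
        = 2 • bb μ α x (J+K+1) 1 + 4 • bb μ α x (J+1) (K+1)
          + 4 • bb μ α x (K+1) (J+1) + 2 • bb μ α x 1 (J+K+1) := by
    intro J K hJK
    have S := sym22 μ α h4 ((α^(J+K)) (homPow μ α x (0+1)))
      ((α^K) (homPow μ α x (J+1))) ((α^J) (homPow μ α x (K+1)))
    rw [Rterm μ α hmul IH x J K 0 0 K J (J+K) (J+K) (J+K+2) 0 (J+K+1) 1
          (by omega) (by omega) (by omega) (by omega) (by omega) (by omega) (by omega) (by omega) (by omega),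
        Rterm μ α hmul IH x K J 0 0 J K (J+K) (J+K) (J+K+2) 0 (J+K+1) 1
          (by omega) (by omega) (by omega) (by omega) (by omega) (by omega) (by omega) (by omega) (by omega),
        Rterm μ α hmul IH x J 0 K 0 K (J+K) J (J+K) (J+K+2) 0 (J+1) (K+1)
          (by omega) (by omega) (by omega) (by omega) (by omega) (by omega) (by omega) (by omega) (by omega),
        Rterm μ α hmul IH x K 0 J 0 J (J+K) K (J+K) (J+K+2) 0 (K+1) (J+1)
          (by omega) (by omega) (by omega) (by omega) (by omega) (by omega) (by omega) (by omega) (by omega),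
        Rterm μ α hmul IH x J 0 0 K K (J+K) (J+K) J (J+2) K (J+1) (K+1)
          (by omega) (by omega) (by omega) (by omega) (by omega) (by omega) (by omega) (by omega) (by omega),
        Rterm μ α hmul IH x K 0 0 J J (J+K) (J+K) K (K+2) J (K+1) (J+1)
          (by omega) (by omega) (by omega) (by omega) (by omega) (by omega) (by omega) (by omega) (by omega),
        Rterm μ α hmul IH x 0 J K 0 (J+K) K J (J+K) (J+K+2) 0 (J+1) (K+1)
          (by omega) (by omega) (by omega) (by omega) (by omega) (by omega) (by omega) (by omega) (by omega),
        Rterm μ α hmul IH x 0 K J 0 (J+K) J K (J+K) (J+K+2) 0 (K+1) (J+1)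
          (by omega) (by omega) (by omega) (by omega) (by omega) (by omega) (by omega) (by omega) (by omega),
        Rterm μ α hmul IH x 0 J 0 K (J+K) K (J+K) J (J+2) K (J+1) (K+1)
          (by omega) (by omega) (by omega) (by omega) (by omega) (by omega) (by omega) (by omega) (by omega),
        Rterm μ α hmul IH x 0 K 0 J (J+K) J (J+K) K (K+2) J (K+1) (J+1)
          (by omega) (by omega) (by omega) (by omega) (by omega) (by omega) (by omega) (by omega) (by omega),
        Rterm μ α hmul IH x 0 0 J K (J+K) (J+K) K J (J+2) K 1 (J+K+1)
          (by omega) (by omega) (by omega) (by omega) (by omega) (by omega) (by omega) (by omega) (by omega),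
        Rterm μ α hmul IH x 0 0 K J (J+K) (J+K) J K (K+2) J 1 (J+K+1)
          (by omega) (by omega) (by omega) (by omega) (by omega) (by omega) (by omega) (by omega) (by omega)] at S
    refine sub_eq_zero.mp ?_
    rw [← S]
    abel
  -- symmetrized quartic relation with k-scalars
  have hM : ∀ J K : ℕ, J + K + 4 = n →
      (6:k) • homPow μ α x n + (3:k) • bb μ α x (J+2) K + (3:k) • bb μ α x J (K+2)
        = (4:k) • bb μ α x 1 (J+K+1) + (8:k) • bb μ α x (J+1) (K+1) := by
    intro J K h
    have raw := hMraw J K h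
    rw [hbase (J+K+2) (by omega), hsym (K+2) J (by omega), hsym (K+1) (J+1) (by omega),
        hsym (J+K+1) 1 (by omega)] at raw
    have conv : ∀ (m : ℕ) (v : A), ((m:ℕ):k) • v = m • v := fun m v => Nat.cast_smul_eq_nsmul k m v
    rw [show (6:k) = ((6:ℕ):k) by norm_num, show (3:k) = ((3:ℕ):k) by norm_num,
        show (4:k) = ((4:ℕ):k) by norm_num, show (8:k) = ((8:ℕ):k) by norm_num,
        conv, conv, conv, conv, conv]
    refine raw.trans ?_
    abel
  -- the main recursion : bb s t - x^n = ff s • E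
  have claim2 : ∀ s t, s + t + 2 = n →
      bb μ α x s t - homPow μ α x n
        = (ff s : k) • (bb μ α x 1 (n-3) - homPow μ α x n) := by
    intro s
    induction s using Nat.strong_induction_on with
    | _ s IHs =>
      intro t ht
      rcases eq_or_ne s 0 with rfl | hs0
      · rw [hsym 0 t (by omega), hbase t (by omega)]
        simp [ff]
      rcases eq_or_ne s 1 with rfl | hs1
      · have htt : t = n - 3 := by omega
        subst htt
        simp [ff]
      obtain ⟨s', rfl⟩ : ∃ s', s = s' + 2 := ⟨s - 2, by omega⟩
      have hm := hM s' t (by omega)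
      have A1 := IHs s' (by omega) (t+2) (by omega)
      have A2 := IHs (s'+1) (by omega) (t+1) (by omega)
      have A3 := IHs 1 (by omega) (s'+t+1) (by omega)
      have hffk := ff_rec_k (k := k) s'
      have key : (3:k) • (bb μ α x (s'+2) t - homPow μ α x n
            - (ff (s'+2) : k) • (bb μ α x 1 (n-3) - homPow μ α x n))
          = ((6:k) • homPow μ α x n + (3:k) • bb μ α x (s'+2) t + (3:k) • bb μ α x s' (t+2)
              - ((4:k) • bb μ α x 1 (s'+t+1) + (8:k) • bb μ α x (s'+1) (t+1)))
            + (-3:k) • (bb μ α x s' (t+2) - homPow μ α x n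
                - (ff s' : k) • (bb μ α x 1 (n-3) - homPow μ α x n))
            + (8:k) • (bb μ α x (s'+1) (t+1) - homPow μ α x n
                - (ff (s'+1) : k) • (bb μ α x 1 (n-3) - homPow μ α x n))
            + (4:k) • (bb μ α x 1 (s'+t+1) - homPow μ α x n
                - (ff 1 : k) • (bb μ α x 1 (n-3) - homPow μ α x n))
            + ((4 * (ff 1 : k) + 8 * (ff (s'+1) : k) - 3 * (ff s' : k)) - 3 * (ff (s'+2) : k))
                • (bb μ α x 1 (n-3) - homPow μ α x n) := by
        module
      rw [sub_eq_zero_of_eq hm, sub_eq_zero_of_eq A1, sub_eq_zero_of_eq A2,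
          sub_eq_zero_of_eq A3, ← hffk, sub_self, zero_smul] at key
      simp only [smul_zero, add_zero, zero_add] at key
      exact sub_eq_zero.mp (smul_cancel (c := (3:k)) (by norm_num) key)
  -- conclude: E = 0, so bb s t = x^n always
  have hEz : bb μ α x 1 (n-3) - homPow μ α x n = 0 := by
    have h1 := claim2 (n-2) 0 (by omega)
    rw [hbase (n-2) (by omega), sub_self] at h1
    have h2 : (ff (n-2) : k) • (bb μ α x 1 (n-3) - homPow μ α x n) = 0 := h1.symm
    refine smul_cancel (c := ((ff (n-2) : ℚ) : k)) ?_ h2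
    have hge : 1 ≤ ff (n-2) := by
      obtain ⟨m, hm⟩ : ∃ m, n - 2 = m + 1 := ⟨n - 3, by omega⟩
      rw [hm]
      exact ff_ge_one m
    exact Rat.cast_ne_zero.mpr (by linarith)
  have claimF : ∀ s t, s + t + 2 = n → bb μ α x s t = homPow μ α x n := by
    intro s t h
    have := claim2 s t h
    rw [hEz, smul_zero] at this
    exact sub_eq_zero.mp this
  rw [bb_eq μ α x (i-1) (n-i-1) i (n-i) (n-i-1) (i-1) (by omega) (by omega) rfl rfl]
  exact (claimF (i-1) (n-i-1) (by omega)).symm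


lemma nth2 : IsNthHomPowerAssoc μ α 2 := by
  intro x i h1 h2
  have hi : i = 1 := by omega
  subst hi
  show homPow μ α x 2 = μ ((α^(0:ℕ)) (homPow μ α x 1)) ((α^(0:ℕ)) (homPow μ α x 1))
  simp [homPow_two, homPow_one, pow_zero]

lemma nth3 (h3 : ∀ y : A, homAssoc μ α y y y = 0) : IsNthHomPowerAssoc μ α 3 := by
  intro x i h1 h2
  have hi : i = 1 ∨ i = 2 := by omega
  have hx' : μ (μ x x) (α x) = μ (α x) (μ x x) := by
    have hx := h3 x
    have he : homAssoc μ α x x x = μ (μ x x) (α x) - μ (α x) (μ x x) := rfl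
    rw [he] at hx
    exact sub_eq_zero.mp hx
  rcases hi with rfl | rfl
  · show homPow μ α x 3 = μ ((α^(1:ℕ)) (homPow μ α x 1)) ((α^(0:ℕ)) (homPow μ α x 2))
    simp only [pow_one, pow_zero, Module.End.one_apply, homPow_one, homPow_two, homPow_three]
    exact hx'
  · show homPow μ α x 3 = μ ((α^(0:ℕ)) (homPow μ α x 2)) ((α^(1:ℕ)) (homPow μ α x 1))
    simp only [pow_one, pow_zero, Module.End.one_apply, homPow_one, homPow_two, homPow_three]

lemma main24 (hmul : IsMultiplicative μ α)
    (hc : ∀ x : A, homAssoc μ α x x x = 0 ∧ homAssoc μ α (μ x x) (α x) (α x) = 0) :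
    IsHomPowerAssoc μ α := by
  intro n
  induction n using Nat.strong_induction_on with
  | _ n IH =>
    intro hn
    rcases eq_or_ne n 2 with rfl | h2
    · exact nth2 μ α
    rcases eq_or_ne n 3 with rfl | h3'
    · exact nth3 μ α (fun y => (hc y).1)
    exact step μ α hmul (fun y => (hc y).1) (fun y => (hc y).2) (by omega)
      (fun m hm2 hmn => IH m hmn hm2)

lemma c3c2 (hmul : IsMultiplicative μ α) (h : IsUpToNthHomPowerAssoc μ α 4) :
    ∀ x : A, homAssoc μ α x x x = 0 ∧ homAssoc μ α (μ x x) (α x) (α x) = 0 := by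
  intro x
  have h33 := h 3 (by norm_num) (by norm_num) x 1 (by norm_num) (by norm_num)
  have h42 := h 4 (by norm_num) (by norm_num) x 2 (by norm_num) (by norm_num)
  norm_num [homPow_one, homPow_two, pow_one, pow_zero] at h33 h42
  -- h33 : homPow x 3 = μ (α x) (μ x x);  h42 : homPow x 4 = μ (α (μ x x)) (α (μ x x))
  constructor
  · show μ (μ x x) (α x) - μ (α x) (μ x x) = 0
    rw [← homPow_three μ α x, h33, sub_self]
  · show μ (μ (μ x x) (α x)) (α (α x)) - μ (α (μ x x)) (μ (α x) (α x)) = 0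
    rw [← hmul x x, ← homPow_four μ α x, h42, sub_self]

end Stmt16Aux

open Stmt16Aux

/-- Main theorem: for a multiplicative Hom-algebra the following are equivalent:
(1) `x²α(x) = α(x)x²` and `x⁴ = α(x²)α(x²)`;
(2) `as(x,x,x) = 0` and `as(x²,α(x),α(x)) = 0`;
(3) `A` is up to fourth Hom-power associative;
(4) `A` is Hom-power associative. -/
theorem stmt16 (μ : A →ₗ[k] A →ₗ[k] A) (α : A →ₗ[k] A)
    (hmul : IsMultiplicative μ α) :
    ((∀ x : A, μ (μ x x) (α x) = μ (α x) (μ x x) ∧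
        homPow μ α x 4 = μ (α (μ x x)) (α (μ x x))) ↔
      (∀ x : A, homAssoc μ α x x x = 0 ∧ homAssoc μ α (μ x x) (α x) (α x) = 0)) ∧
    ((∀ x : A, homAssoc μ α x x x = 0 ∧ homAssoc μ α (μ x x) (α x) (α x) = 0) ↔
      IsUpToNthHomPowerAssoc μ α 4) ∧
    (IsUpToNthHomPowerAssoc μ α 4 ↔ IsHomPowerAssoc μ α) := by
  refine ⟨?_, ?_, ?_⟩
  · constructor
    · intro h x
      obtain ⟨ha, hb⟩ := h x
      constructor
      · show μ (μ x x) (α x) - μ (α x) (μ x x) = 0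
        rw [ha, sub_self]
      · show μ (μ (μ x x) (α x)) (α (α x)) - μ (α (μ x x)) (μ (α x) (α x)) = 0
        rw [← hmul x x, ← homPow_four μ α x, hb, sub_self]
    · intro h x
      obtain ⟨ha, hb⟩ := h x
      constructor
      · have ha' : μ (μ x x) (α x) - μ (α x) (μ x x) = 0 := ha
        exact sub_eq_zero.mp ha'
      · have hb' : μ (μ (μ x x) (α x)) (α (α x)) - μ (α (μ x x)) (μ (α x) (α x)) = 0 := hb
        rw [← hmul x x, ← homPow_four μ α x] at hb'
        exact sub_eq_zero.mp hb'
  · constructor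
    · intro h m hm2 _
      exact main24 μ α hmul h m hm2
    · exact c3c2 μ α hmul
  · constructor
    · intro h
      exact main24 μ α hmul (c3c2 μ α hmul h)
    · intro h m hm2 _
      exact h m hm2
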